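/- Let A and B be positive invertible operators with 0 < m·I ≤ A ≤ M·I and A ≤ B. Then for every p ≥ 1, A^p ≤ K(m,M,p) · B^p ≤ (M/m)^{p−1} · B^p, where K(m,M,p) = ((p−1)^{p−1}/p^p) · (M^p − m^p)^p / ((M−m)(mM^p − Mm^p)^{p−1}) is the generalized Kantorovich constant. -/

import Mathlib

/-- The generalized Kantorovich (Ky Fan–Furuta) constant
`K(m,M,p) = ((p-1)^{p-1}/p^p) · (M^p - m^p)^p / ((M-m)(m M^p - M m^p)^{p-1})`. -/
noncomputable def kantorovichConst (m M p : ℝ) : ℝ :=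
  ((p - 1) ^ (p - 1) / p ^ p) * (M ^ p - m ^ p) ^ p /
    ((M - m) * (m * M ^ p - M * m ^ p) ^ (p - 1))

/-!
On `[m, M]` the convex function `t ↦ t ^ p` lies below its chord `ℓ(t) = α t + β`, and `α ≥ 0`;
so `A ^ p ≤ ℓ(A) = α A + β ≤ α B + β = ℓ(B)`. It remains to bound `ℓ` by a multiple of `t ^ p` on
`[0, ∞)`: `ℓ` is exactly `K(m, M, p)` times the tangent of `t ↦ t ^ p` at the point `t₀`
maximising `ℓ(t) / t ^ p`, and the power function lies above its tangents (Bernoulli). Hence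
`ℓ(B) ≤ K • B ^ p`. Finally `K = α / (p t₀ ^ (p - 1))` with `α ≤ p M ^ (p - 1)` and `m ≤ t₀`
(both again tangent inequalities), which gives `K ≤ (M / m) ^ (p - 1)`.
-/

open Real

lemma Real.rpow_tangent_le_rpow {p s t : ℝ} (hp : 1 ≤ p) (hs : 0 < s) (ht : 0 ≤ t) :
    s ^ p + p * s ^ (p - 1) * (t - s) ≤ t ^ p := by
  have bernoulli := one_add_mul_self_le_rpow_one_add (s := t / s - 1) (by
    linarith [div_nonneg ht hs.le]) hp
  rw [add_sub_cancel, div_rpow ht hs.le] at bernoulli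
  have hsp : 0 < s ^ p := rpow_pos_of_pos hs p
  calc s ^ p + p * s ^ (p - 1) * (t - s) = s ^ p * (1 + p * (t / s - 1)) := by
        rw [rpow_sub_one hs.ne']; field_simp
    _ ≤ s ^ p * (t ^ p / s ^ p) := by gcongr
    _ = t ^ p := by field_simp

lemma Real.mul_rpow_sub_mul_rpow_pos {m M p : ℝ} (hm : 0 < m) (hmM : m < M) (hp : 1 < p) :
    0 < m * M ^ p - M * m ^ p := by
  have hM : 0 < M := hm.trans hmM
  have hlt : m ^ (p - 1) < M ^ (p - 1) := rpow_lt_rpow hm.le hmM (by linarith)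
  rw [rpow_sub_one hm.ne', rpow_sub_one hM.ne', div_lt_div_iff₀ hm hM] at hlt
  linarith

namespace Kantorovich

noncomputable def chordSlope (m M p : ℝ) : ℝ := (M ^ p - m ^ p) / (M - m)

noncomputable def chordIntercept (m M p : ℝ) : ℝ := (M * m ^ p - m * M ^ p) / (M - m)

/-- The point `t₀` at which the chord touches `kantorovichConst m M p * t ^ p`. -/
noncomputable def tangencyPoint (m M p : ℝ) : ℝ :=
  p * (m * M ^ p - M * m ^ p) / ((p - 1) * (M ^ p - m ^ p))

variable {m M p : ℝ}

lemma chordSlope_pos (hm : 0 ≤ m) (hmM : m < M) (hp : 0 < p) : 0 < chordSlope m M p :=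
  div_pos (sub_pos.2 (rpow_lt_rpow hm hmM hp)) (sub_pos.2 hmM)

lemma chordSlope_mul_add_chordIntercept (hmM : m < M) (x : ℝ) :
    chordSlope m M p * x + chordIntercept m M p =
      ((M - x) * m ^ p + (x - m) * M ^ p) / (M - m) := by
  have : M - m ≠ 0 := sub_ne_zero.2 hmM.ne'
  simp only [chordSlope, chordIntercept]
  field_simp
  ring

lemma rpow_le_chord (hm : 0 ≤ m) (hmM : m < M) (hp : 1 ≤ p) {x : ℝ} (hmx : m ≤ x)
    (hxM : x ≤ M) :
    x ^ p ≤ chordSlope m M p * x + chordIntercept m M p := by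
  rw [chordSlope_mul_add_chordIntercept hmM, le_div_iff₀ (sub_pos.2 hmM), mul_comm]
  rcases hmx.eq_or_lt with rfl | hmx
  · simp
  rcases hxM.eq_or_lt with rfl | hxM
  · simp
  exact (convexOn_rpow hp).secant_mono_aux1 (Set.mem_Ici.2 hm) (Set.mem_Ici.2 (by linarith))
    hmx hxM

lemma kantorovichConst_eq (hm : 0 < m) (hmM : m < M) (hp : 1 < p) :
    kantorovichConst m M p = chordSlope m M p / (p * tangencyPoint m M p ^ (p - 1)) := by
  have ha : 0 < M ^ p - m ^ p := sub_pos.2 (rpow_lt_rpow hm.le hmM (by linarith))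
  have hb := mul_rpow_sub_mul_rpow_pos hm hmM hp
  have hp0 : 0 < p := by linarith
  have hq0 : 0 < p - 1 := by linarith
  have : M - m ≠ 0 := sub_ne_zero.2 hmM.ne'
  have : (M ^ p - m ^ p) ^ p ≠ 0 := (rpow_pos_of_pos ha _).ne'
  have : (m * M ^ p - M * m ^ p) ^ (p - 1) ≠ 0 := (rpow_pos_of_pos hb _).ne'
  have : (p - 1) ^ (p - 1) ≠ 0 := (rpow_pos_of_pos hq0 _).ne'
  have : p ^ p ≠ 0 := (rpow_pos_of_pos hp0 _).ne'
  rw [kantorovichConst, chordSlope, tangencyPoint, div_rpow (by positivity) (by positivity),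
    mul_rpow hp0.le hb.le, mul_rpow hq0.le ha.le, rpow_sub_one ha.ne' p,
    rpow_sub_one hp0.ne' p]
  field_simp

lemma chordIntercept_eq (hmM : m < M) (hp : 1 < p) (ha : M ^ p - m ^ p ≠ 0) :
    chordIntercept m M p = -((p - 1) / p) * chordSlope m M p * tangencyPoint m M p := by
  have : M - m ≠ 0 := sub_ne_zero.2 hmM.ne'
  have : p - 1 ≠ 0 := by linarith
  have : p ≠ 0 := by linarith
  rw [chordIntercept, chordSlope, tangencyPoint]
  field_simp
  ring

lemma chord_eq_kantorovichConst_mul_tangent (hm : 0 < m) (hmM : m < M) (hp : 1 < p)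
    (ht₀ : 0 < tangencyPoint m M p) (t : ℝ) :
    chordSlope m M p * t + chordIntercept m M p =
      kantorovichConst m M p * (tangencyPoint m M p ^ p +
        p * tangencyPoint m M p ^ (p - 1) * (t - tangencyPoint m M p)) := by
  have ha : M ^ p - m ^ p ≠ 0 := (sub_pos.2 (rpow_lt_rpow hm.le hmM (by linarith))).ne'
  have : p ≠ 0 := by linarith
  have : tangencyPoint m M p ^ p ≠ 0 := (rpow_pos_of_pos ht₀ _).ne'
  rw [kantorovichConst_eq hm hmM hp, chordIntercept_eq hmM hp ha, rpow_sub_one ht₀.ne']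
  field_simp
  ring

lemma le_tangencyPoint (hm : 0 < m) (hmM : m < M) (hp : 1 < p) : m ≤ tangencyPoint m M p := by
  have ha : 0 < M ^ p - m ^ p := sub_pos.2 (rpow_lt_rpow hm.le hmM (by linarith))
  have tangent := rpow_tangent_le_rpow hp.le hm (hm.trans hmM).le
  have hmp : m ^ p = m ^ (p - 1) * m := by rw [rpow_sub_one hm.ne']; field_simp
  rw [tangencyPoint, le_div_iff₀ (mul_pos (by linarith) ha), hmp]
  rw [hmp] at tangent
  nlinarith [mul_le_mul_of_nonneg_left tangent hm.le]

lemma chordSlope_le (hm : 0 ≤ m) (hmM : m < M) (hp : 1 ≤ p) :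
    chordSlope m M p ≤ p * M ^ (p - 1) := by
  have tangent := rpow_tangent_le_rpow hp (hm.trans_lt hmM) hm
  rw [chordSlope, div_le_iff₀ (sub_pos.2 hmM)]
  linarith

lemma kantorovichConst_one (hmM : m ≠ M) : kantorovichConst m M 1 = 1 := by
  have : M - m ≠ 0 := sub_ne_zero.2 hmM.symm
  simp [kantorovichConst, this]

lemma chordSlope_one (hmM : m ≠ M) : chordSlope m M 1 = 1 := by
  have : M - m ≠ 0 := sub_ne_zero.2 hmM.symm
  simp [chordSlope, this]

lemma chordIntercept_one : chordIntercept m M 1 = 0 := by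
  simp [chordIntercept, mul_comm]

theorem chord_le_kantorovichConst_mul_rpow (hm : 0 < m) (hmM : m < M) (hp : 1 ≤ p) {t : ℝ}
    (ht : 0 ≤ t) :
    chordSlope m M p * t + chordIntercept m M p ≤ kantorovichConst m M p * t ^ p := by
  rcases hp.eq_or_lt with rfl | hp
  · simp [chordSlope_one hmM.ne, chordIntercept_one, kantorovichConst_one hmM.ne]
  have ht₀ := hm.trans_le (le_tangencyPoint hm hmM hp)
  have hK : 0 ≤ kantorovichConst m M p := by
    rw [kantorovichConst_eq hm hmM hp]
    have := chordSlope_pos hm.le hmM (by linarith : 0 < p)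
    positivity
  rw [chord_eq_kantorovichConst_mul_tangent hm hmM hp ht₀]
  exact mul_le_mul_of_nonneg_left (rpow_tangent_le_rpow hp.le ht₀ ht) hK

theorem kantorovichConst_le_div_rpow (hm : 0 < m) (hmM : m < M) (hp : 1 ≤ p) :
    kantorovichConst m M p ≤ (M / m) ^ (p - 1) := by
  rcases hp.eq_or_lt with rfl | hp
  · simp [kantorovichConst_one hmM.ne]
  have hp0 : 0 < p := by linarith
  calc kantorovichConst m M p = chordSlope m M p / (p * tangencyPoint m M p ^ (p - 1)) :=
        kantorovichConst_eq hm hmM hp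
    _ ≤ p * M ^ (p - 1) / (p * m ^ (p - 1)) := by
        have hM : 0 < M := hm.trans hmM
        refine div_le_div₀ (by positivity) (chordSlope_le hm.le hmM hp.le) (by positivity) ?_
        gcongr
        exact le_tangencyPoint hm hmM hp
    _ = (M / m) ^ (p - 1) := by rw [mul_div_mul_left _ _ hp0.ne', div_rpow (hm.trans hmM).le hm.le]

end Kantorovich

section CFC

variable {A : Type*} [CStarAlgebra A]

lemma cfc_affine {a : A} (α β : ℝ) (ha : IsSelfAdjoint a := by cfc_tac) :
    cfc (fun x : ℝ => α * x + β) a = α • a + algebraMap ℝ A β := by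
  rw [cfc_add .., cfc_const_mul_id α a, cfc_const β a]

lemma cfc_le_cfc_of_le_affine [PartialOrder A] [StarOrderedRing A] {a b : A} (hab : a ≤ b)
    {f g : ℝ → ℝ} {α β : ℝ} (hα : 0 ≤ α)
    (hf : ∀ x ∈ spectrum ℝ a, f x ≤ α * x + β) (hg : ∀ x ∈ spectrum ℝ b, α * x + β ≤ g x)
    (hfc : ContinuousOn f (spectrum ℝ a) := by cfc_cont_tac)
    (hgc : ContinuousOn g (spectrum ℝ b) := by cfc_cont_tac)
    (ha : IsSelfAdjoint a := by cfc_tac) (hb : IsSelfAdjoint b := by cfc_tac) :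
    cfc f a ≤ cfc g b :=
  calc cfc f a ≤ cfc (fun x : ℝ => α * x + β) a := cfc_mono hf
    _ = α • a + algebraMap ℝ A β := cfc_affine α β
    _ ≤ α • b + algebraMap ℝ A β := by gcongr
    _ = cfc (fun x : ℝ => α * x + β) b := (cfc_affine α β).symm
    _ ≤ cfc g b := cfc_mono hg

end CFC

open Kantorovich

theorem rpow_le_kantorovich_rpow_general
    {H : Type*} [NormedAddCommGroup H] [InnerProductSpace ℂ H] [CompleteSpace H]
    (A B : H →L[ℂ] H)
    (m M : ℝ) (hm : 0 < m) (hmM : m < M)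
    (h1 : m • (1 : H →L[ℂ] H) ≤ A) (h2 : A ≤ M • (1 : H →L[ℂ] H))
    (hAB : A ≤ B) (p : ℝ) (hp : 1 ≤ p) :
    A ^ p ≤ kantorovichConst m M p • B ^ p ∧
      kantorovichConst m M p • B ^ p ≤ ((M / m) ^ (p - 1)) • B ^ p := by
  have hA : 0 ≤ A := (smul_nonneg hm.le zero_le_one).trans h1
  have hB : 0 ≤ B := hA.trans hAB
  rw [← Algebra.algebraMap_eq_smul_one] at h1 h2
  have hcont : Continuous fun x : ℝ => x ^ p := continuous_rpow_const (by linarith)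
  refine ⟨?_, smul_le_smul_of_nonneg_right (kantorovichConst_le_div_rpow hm hmM hp) CFC.rpow_nonneg⟩
  rw [CFC.rpow_eq_cfc_real hA, CFC.rpow_eq_cfc_real hB, ← cfc_const_mul _ _ _ hcont.continuousOn]
  refine cfc_le_cfc_of_le_affine hAB (chordSlope_pos hm.le hmM (by linarith)).le
    (fun x hx => rpow_le_chord hm.le hmM hp ((algebraMap_le_iff_le_spectrum).1 h1 x hx)
      ((le_algebraMap_iff_spectrum_le).1 h2 x hx))
    (fun x hx => chord_le_kantorovichConst_mul_rpow hm hmM hp (spectrum_nonneg_of_nonneg hB hx))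
    hcont.continuousOn (continuous_const.mul hcont).continuousOn

/-- Let `A ≤ B` be positive invertible operators with `m • 1 ≤ A ≤ M • 1`, `0 < m < M`.
Then for every real `p ≥ 1`, `A^p ≤ K(m,M,p) • B^p ≤ (M/m)^{p-1} • B^p`. -/
theorem rpow_le_kantorovich_rpow
    {H : Type*} [NormedAddCommGroup H] [InnerProductSpace ℂ H] [CompleteSpace H]
    (A B : H →L[ℂ] H) (hA : 0 ≤ A) (hB : 0 ≤ B)
    (hAinv : Invertible A) (hBinv : Invertible B)
    (m M : ℝ) (hm : 0 < m) (hmM : m < M)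
    (h1 : m • (1 : H →L[ℂ] H) ≤ A) (h2 : A ≤ M • (1 : H →L[ℂ] H))
    (hAB : A ≤ B) (p : ℝ) (hp : 1 ≤ p) :
    A ^ p ≤ kantorovichConst m M p • B ^ p ∧
      kantorovichConst m M p • B ^ p ≤ ((M / m) ^ (p - 1)) • B ^ p :=
  rpow_le_kantorovich_rpow_general A B m M hm hmM h1 h2 hAB p hp
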